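/- arXiv:0804.4454 — 3 statements merged into one kernel-verified Lean document; each statement's English description precedes it below -/
import Mathlib

section
/- For all continuous compactly supported f₁, f₂ : G → ℂ, N^ρ(f₁ ⋆ f₂) ≤ N^ρ(f₁)·N^ρ(f₂); that is, the twisted norm N^ρ obtained from an unconditional norm N is again submultiplicative for convolution (so B^ρ(G) is an unconditional completion of C_c(G)). -/
open MeasureTheory

/-!
With `w g = ‖ρ g‖`, multiplicativity of `ρ` gives `w g ≤ w h * w (h⁻¹ * g)`, hence the pointwise
bound `|f₁ ⋆ f₂| w ≤ (|f₁| w) ⋆ (|f₂| w)`. Monotonicity of `N` and then its submultiplicativity,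
applied to `|f₁| w` and `|f₂| w`, give `N^ρ(f₁ ⋆ f₂) ≤ N^ρ(f₁) N^ρ(f₂)`.
-/

section WeightedAbs

variable {G : Type*} [TopologicalSpace G] {w : G → ℝ} {f : G → ℂ}

noncomputable def weightedAbs (w : G → ℝ) (f : G → ℂ) : G → ℂ :=
  fun g => ((‖f g‖ * w g : ℝ) : ℂ)

theorem Continuous.weightedAbs (hf : Continuous f) (hw : Continuous w) :
    Continuous (weightedAbs w f) := by
  unfold _root_.weightedAbs; fun_prop

theorem HasCompactSupport.weightedAbs (hf : HasCompactSupport f) :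
    HasCompactSupport (weightedAbs w f) :=
  hf.mono fun g hg h0 => hg (by simp [_root_.weightedAbs, h0])

end WeightedAbs

section MulConv

variable {G : Type*} [Group G] [TopologicalSpace G] [IsTopologicalGroup G] [MeasurableSpace G]
  (μ : Measure G) {f₁ f₂ : G → ℂ}

noncomputable def mulConv (μ : Measure G) (f₁ f₂ : G → ℂ) : G → ℂ :=
  fun g => ∫ h, f₁ h * f₂ (h⁻¹ * g) ∂μ

theorem HasCompactSupport.mulConv (hf₁ : HasCompactSupport f₁) (hf₂ : HasCompactSupport f₂) :
    HasCompactSupport (mulConv μ f₁ f₂) := by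
  refine HasCompactSupport.intro (hf₁.isCompact.mul hf₂.isCompact) fun g hg => ?_
  have hzero : ∀ h, f₁ h * f₂ (h⁻¹ * g) = 0 := fun h => by
    by_contra hne
    obtain ⟨h₁, h₂⟩ := mul_ne_zero_iff.mp hne
    exact hg (by simpa using Set.mul_mem_mul (subset_tsupport f₁ h₁) (subset_tsupport f₂ h₂))
  simp only [_root_.mulConv, hzero, integral_zero]

variable [OpensMeasurableSpace G] [IsFiniteMeasureOnCompacts μ]

theorem Continuous.mulConv (hf₁ : Continuous f₁) (hf₁c : HasCompactSupport f₁)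
    (hf₂ : Continuous f₂) : Continuous (mulConv μ f₁ f₂) := by
  rw [← continuousOn_univ]
  refine continuousOn_integral_of_compact_support hf₁c (by fun_prop) fun g h _ hh => ?_
  simp [image_eq_zero_of_notMem_tsupport hh]

theorem norm_weightedAbs_mulConv_le {w : G → ℝ} (hw : Continuous w) (hw0 : ∀ g, 0 ≤ w g)
    (hwmul : ∀ x y, w (x * y) ≤ w x * w y)
    (hf₁ : Continuous f₁) (hf₁c : HasCompactSupport f₁) (hf₂ : Continuous f₂) (g : G) :
    ‖weightedAbs w (mulConv μ f₁ f₂) g‖ ≤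
      ‖mulConv μ (weightedAbs w f₁) (weightedAbs w f₂) g‖ := by
  set F : G → ℝ := fun h => ‖f₁ h‖ * w h * (‖f₂ (h⁻¹ * g)‖ * w (h⁻¹ * g))
  have hF0 : ∀ h, 0 ≤ F h := fun h =>
    mul_nonneg (mul_nonneg (norm_nonneg _) (hw0 h)) (mul_nonneg (norm_nonneg _) (hw0 _))
  have hFint : Integrable F μ :=
    (by fun_prop : Continuous F).integrable_of_hasCompactSupport hf₁c.norm.mul_right.mul_right
  have hconv : mulConv μ (weightedAbs w f₁) (weightedAbs w f₂) g = ((∫ h, F h ∂μ : ℝ) : ℂ) := by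
    simp only [_root_.mulConv, _root_.weightedAbs, F, ← Complex.ofReal_mul]
    exact integral_ofReal
  have hpointwise : ∀ h, ‖f₁ h * f₂ (h⁻¹ * g)‖ * w g ≤ F h := fun h => by
    have hwg := hwmul h (h⁻¹ * g)
    rw [mul_inv_cancel_left] at hwg
    calc ‖f₁ h * f₂ (h⁻¹ * g)‖ * w g ≤ ‖f₁ h‖ * ‖f₂ (h⁻¹ * g)‖ * (w h * w (h⁻¹ * g)) := by
          rw [norm_mul]; gcongr
      _ = F h := by ring
  rw [hconv, Complex.norm_real, Real.norm_of_nonneg (integral_nonneg hF0), _root_.weightedAbs,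
    Complex.norm_real, Real.norm_of_nonneg (mul_nonneg (norm_nonneg _) (hw0 g))]
  calc ‖mulConv μ f₁ f₂ g‖ * w g ≤ (∫ h, ‖f₁ h * f₂ (h⁻¹ * g)‖ ∂μ) * w g :=
        mul_le_mul_of_nonneg_right (norm_integral_le_integral_norm _) (hw0 g)
    _ = ∫ h, ‖f₁ h * f₂ (h⁻¹ * g)‖ * w g ∂μ := (integral_mul_const _ _).symm
    _ ≤ ∫ h, F h ∂μ := integral_mono_of_nonneg
        (.of_forall fun h => mul_nonneg (norm_nonneg _) (hw0 g)) hFint (.of_forall hpointwise)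

end MulConv

theorem stmt_5_general {G : Type*} [Group G] [TopologicalSpace G] [IsTopologicalGroup G]
    [MeasurableSpace G] [BorelSpace G]
    {V : Type*} [NormedAddCommGroup V] [NormedSpace ℂ V]
    (ρ : G →* (V →L[ℂ] V)ˣ)
    (hρ : Continuous fun g : G => (ρ g : V →L[ℂ] V))
    (μ : Measure G) [μ.IsHaarMeasure]
    (N : (G → ℂ) → ℝ)
    (hNmono : ∀ f₁ f₂ : G → ℂ, Continuous f₁ → HasCompactSupport f₁ →
      Continuous f₂ → HasCompactSupport f₂ →
      (∀ g : G, ‖f₁ g‖ ≤ ‖f₂ g‖) → N f₁ ≤ N f₂)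
    (hNsub : ∀ f₁ f₂ : G → ℂ, Continuous f₁ → HasCompactSupport f₁ →
      Continuous f₂ → HasCompactSupport f₂ →
      N (fun g => ∫ h, f₁ h * f₂ (h⁻¹ * g) ∂μ) ≤ N f₁ * N f₂)
    (Nρ : (G → ℂ) → ℝ)
    (hNρ : ∀ f : G → ℂ, Nρ f = N (fun g => ((‖f g‖ * ‖(ρ g : V →L[ℂ] V)‖ : ℝ) : ℂ)))
    (f₁ f₂ : G → ℂ) (hf₁ : Continuous f₁) (hf₁c : HasCompactSupport f₁)
    (hf₂ : Continuous f₂) (hf₂c : HasCompactSupport f₂) :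
    Nρ (fun g => ∫ h, f₁ h * f₂ (h⁻¹ * g) ∂μ) ≤ Nρ f₁ * Nρ f₂ := by
  set w : G → ℝ := fun g => ‖(ρ g : V →L[ℂ] V)‖
  have hw : Continuous w := hρ.norm
  have hwmul : ∀ x y, w (x * y) ≤ w x * w y := fun x y => by
    simpa only [w, map_mul, Units.val_mul] using norm_mul_le _ _
  have hNρ' : ∀ f, Nρ f = N (weightedAbs w f) := hNρ
  have hF₁ := hf₁.weightedAbs hw
  have hF₂ := hf₂.weightedAbs hw
  calc Nρ (mulConv μ f₁ f₂) = N (weightedAbs w (mulConv μ f₁ f₂)) := hNρ' _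
    _ ≤ N (mulConv μ (weightedAbs w f₁) (weightedAbs w f₂)) :=
        hNmono _ _ ((hf₁.mulConv μ hf₁c hf₂).weightedAbs hw) (hf₁c.mulConv μ hf₂c).weightedAbs
          (hF₁.mulConv μ hf₁c.weightedAbs hF₂) (hf₁c.weightedAbs.mulConv μ hf₂c.weightedAbs)
          (norm_weightedAbs_mulConv_le μ hw (fun _ => norm_nonneg _) hwmul hf₁ hf₁c hf₂)
    _ ≤ N (weightedAbs w f₁) * N (weightedAbs w f₂) :=
        hNsub _ _ hF₁ hf₁c.weightedAbs hF₂ hf₂c.weightedAbs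
    _ = Nρ f₁ * Nρ f₂ := by rw [hNρ', hNρ']

/-- Given an unconditional submultiplicative norm `N` on `C_c(G)`, the twisted norm
`N^ρ(f) = N (g ↦ |f(g)| ‖ρ(g)‖)` is again submultiplicative for convolution, so that
`B^ρ(G)` is an unconditional completion of `C_c(G)`. -/
theorem stmt_5 {G : Type*} [Group G] [TopologicalSpace G] [IsTopologicalGroup G]
    [LocallyCompactSpace G] [T2Space G] [MeasurableSpace G] [BorelSpace G]
    {V : Type*} [NormedAddCommGroup V] [NormedSpace ℂ V] [FiniteDimensional ℂ V] [Nontrivial V]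
    (ρ : G →* (V →L[ℂ] V)ˣ)
    (hρ : Continuous fun g : G => (ρ g : V →L[ℂ] V))
    (μ : Measure G) [μ.IsHaarMeasure]
    (N : (G → ℂ) → ℝ)
    (hN0 : ∀ f : G → ℂ, Continuous f → HasCompactSupport f → 0 ≤ N f)
    (hNmono : ∀ f₁ f₂ : G → ℂ, Continuous f₁ → HasCompactSupport f₁ →
      Continuous f₂ → HasCompactSupport f₂ →
      (∀ g : G, ‖f₁ g‖ ≤ ‖f₂ g‖) → N f₁ ≤ N f₂)
    (hNsub : ∀ f₁ f₂ : G → ℂ, Continuous f₁ → HasCompactSupport f₁ →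
      Continuous f₂ → HasCompactSupport f₂ →
      N (fun g => ∫ h, f₁ h * f₂ (h⁻¹ * g) ∂μ) ≤ N f₁ * N f₂)
    (Nρ : (G → ℂ) → ℝ)
    (hNρ : ∀ f : G → ℂ, Nρ f = N (fun g => ((‖f g‖ * ‖(ρ g : V →L[ℂ] V)‖ : ℝ) : ℂ)))
    (f₁ f₂ : G → ℂ) (hf₁ : Continuous f₁) (hf₁c : HasCompactSupport f₁)
    (hf₂ : Continuous f₂) (hf₂c : HasCompactSupport f₂) :
    Nρ (fun g => ∫ h, f₁ h * f₂ (h⁻¹ * g) ∂μ) ≤ Nρ f₁ * Nρ f₂ :=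
  stmt_5_general ρ hρ μ N hNmono hNsub Nρ hNρ f₁ f₂ hf₁ hf₁c hf₂ hf₂c
end

section
/- There exists a continuous compactly supported function c : X → [0, ∞) such that ∫_G c(g⁻¹ · x) dμ(g) = 1 for every x ∈ X. -/
/-!
Properness makes `g ↦ f (g⁻¹ • x)` compactly supported for every compactly supported `f`,
uniformly for `x` in a compact set, so the orbit integral `F x = ∫ f (g⁻¹ • x) dμ(g)` is a
continuous `G`-invariant function. Cocompactness gives a compact `K` meeting every orbit; taking
`f ≥ 0` equal to `1` on `K` (Urysohn) makes `F` positive, and `c = f / F` is the cutoff.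
-/

open MeasureTheory Set

theorem IsOpenMap.exists_isCompact_image_superset {X Y : Type*} [TopologicalSpace X]
    [TopologicalSpace Y] [WeaklyLocallyCompactSpace X] {f : X → Y} (hf : IsOpenMap f)
    {K : Set Y} (hK : IsCompact K) (hKf : K ⊆ range f) :
    ∃ L : Set X, IsCompact L ∧ K ⊆ f '' L := by
  choose V hVc hVn using fun x : X ↦ exists_compact_mem_nhds x
  obtain ⟨s, hs⟩ := hK.elim_finite_subcover (fun x ↦ f '' interior (V x))
    (fun x ↦ hf _ isOpen_interior) fun y hy ↦ by
      obtain ⟨x, rfl⟩ := hKf hy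
      exact mem_iUnion.2 ⟨x, mem_image_of_mem f (mem_interior_iff_mem_nhds.2 (hVn x))⟩
  refine ⟨⋃ x ∈ s, V x, s.isCompact_biUnion fun x _ ↦ hVc x, hs.trans ?_⟩
  simp only [image_iUnion]
  exact iUnion₂_mono fun x _ ↦ image_mono interior_subset

theorem MulAction.exists_isCompact_forall_exists_smul_mem (G X : Type*) [Group G]
    [TopologicalSpace G] [TopologicalSpace X] [WeaklyLocallyCompactSpace X] [MulAction G X]
    [ContinuousConstSMul G X] [CompactSpace (Quotient (MulAction.orbitRel G X))] :
    ∃ K : Set X, IsCompact K ∧ ∀ x : X, ∃ g : G, g • x ∈ K := by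
  have hπ := MulAction.isOpenQuotientMap_quotientMk (Γ := G) (T := X)
  obtain ⟨K, hK, hKπ⟩ := hπ.isOpenMap.exists_isCompact_image_superset isCompact_univ
    (hπ.surjective.range_eq ▸ subset_rfl)
  refine ⟨K, hK, fun x ↦ ?_⟩
  obtain ⟨y, hyK, hyx⟩ := hKπ (mem_univ (Quotient.mk _ x))
  obtain ⟨g, rfl⟩ := MulAction.mem_orbit_iff.1 (MulAction.orbitRel_apply.1 (Quotient.exact hyx))
  exact ⟨g, hyK⟩

theorem ProperSMul.isCompact_setOf_inv_smul_mem {G X : Type*} [Group G] [TopologicalSpace G]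
    [IsTopologicalGroup G] [TopologicalSpace X] [MulAction G X] [ProperSMul G X] {S V : Set X}
    (hS : IsCompact S) (hV : IsCompact V) :
    IsCompact {g : G | ∃ x ∈ V, g⁻¹ • x ∈ S} := by
  convert (ProperSMul.isCompact_setOfPred_inter_nonempty (G := G) hV hS).inv using 1
  ext g
  simp [Set.Nonempty, Set.mem_smul_set]

section OrbitIntegral

variable {G X E : Type*} [Group G] [MulAction G X] [MeasurableSpace G] (μ : Measure G)
  [NormedAddCommGroup E]

theorem integral_comp_inv_smul_smul [NormedSpace ℝ E] [MeasurableMul G] [μ.IsMulLeftInvariant]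
    (f : X → E) (h : G) (x : X) :
    ∫ g, f (g⁻¹ • h • x) ∂μ = ∫ g, f (g⁻¹ • x) ∂μ := by
  simpa [mul_smul] using integral_mul_left_eq_self (μ := μ) (fun g ↦ f (g⁻¹ • x)) h⁻¹

variable [TopologicalSpace G] [IsTopologicalGroup G] [BorelSpace G] [IsFiniteMeasureOnCompacts μ]
  [TopologicalSpace X] [ContinuousSMul G X] [ProperSMul G X]

theorem integrable_comp_inv_smul {f : X → E} (hf : Continuous f) (hfc : HasCompactSupport f)
    (x : X) :
    Integrable (fun g ↦ f (g⁻¹ • x)) μ :=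
  (hf.comp (continuous_inv.smul continuous_const)).integrable_of_hasCompactSupport <|
    .intro (ProperSMul.isCompact_setOf_inv_smul_mem hfc isCompact_singleton)
      fun _ hg ↦ image_eq_zero_of_notMem_tsupport (f := f) fun h ↦ hg ⟨x, rfl, h⟩

theorem continuous_integral_comp_inv_smul [NormedSpace ℝ E] [WeaklyLocallyCompactSpace X]
    {f : X → E} (hf : Continuous f) (hfc : HasCompactSupport f) :
    Continuous fun x ↦ ∫ g, f (g⁻¹ • x) ∂μ := by
  refine continuous_iff_continuousAt.2 fun x₀ ↦ ?_
  obtain ⟨V, hVc, hVn⟩ := exists_compact_mem_nhds x₀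
  refine ContinuousOn.continuousAt ?_ hVn
  exact continuousOn_integral_of_compact_support
    (ProperSMul.isCompact_setOf_inv_smul_mem hfc hVc)
    (hf.comp ((continuous_inv.comp continuous_snd).smul continuous_fst)).continuousOn
    fun x _ hx hg ↦ image_eq_zero_of_notMem_tsupport fun h ↦ hg ⟨x, hx, h⟩

theorem integral_comp_inv_smul_pos [μ.IsOpenPosMeasure] {f : X → ℝ} (hf : Continuous f)
    (hfc : HasCompactSupport f) (hf₀ : 0 ≤ f) {x : X} {g₀ : G} (hg₀ : f (g₀ • x) ≠ 0) :
    0 < ∫ g, f (g⁻¹ • x) ∂μ := by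
  rw [integral_pos_iff_support_of_nonneg (fun g ↦ hf₀ (g⁻¹ • x))
    (integrable_comp_inv_smul μ hf hfc x)]
  exact (hf.comp (continuous_inv.smul continuous_const)).isOpen_support.measure_pos μ
    ⟨g₀⁻¹, by simpa using hg₀⟩

end OrbitIntegral

theorem stmt_9_general {G : Type*} [Group G] [TopologicalSpace G] [IsTopologicalGroup G]
    [MeasurableSpace G] [BorelSpace G]
    (μ : Measure G) [μ.IsHaarMeasure]
    (X : Type*) [TopologicalSpace X] [LocallyCompactSpace X] [T2Space X]
    [MulAction G X] [ContinuousSMul G X] [ProperSMul G X]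
    [CompactSpace (Quotient (MulAction.orbitRel G X))] :
    ∃ c : X → ℝ, Continuous c ∧ HasCompactSupport c ∧ (∀ x : X, 0 ≤ c x) ∧
      ∀ x : X, ∫ g : G, c (g⁻¹ • x) ∂μ = 1 := by
  obtain ⟨K, hK, hK_orbit⟩ := MulAction.exists_isCompact_forall_exists_smul_mem G X
  obtain ⟨f, hf_one, -, hfc, hf_mem⟩ :=
    exists_continuous_one_zero_of_isCompact hK isClosed_empty (disjoint_empty K)
  have hf_nonneg : 0 ≤ ⇑f := fun x ↦ (hf_mem x).1
  set F : X → ℝ := fun x ↦ ∫ g, f (g⁻¹ • x) ∂μ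
  have hF_pos (x : X) : 0 < F x := by
    obtain ⟨g, hg⟩ := hK_orbit x
    exact integral_comp_inv_smul_pos μ f.continuous hfc hf_nonneg (g₀ := g) (by simp [hf_one hg])
  have hF_inv_smul (g : G) (x : X) : F (g⁻¹ • x) = F x := integral_comp_inv_smul_smul μ f g⁻¹ x
  refine ⟨fun x ↦ f x / F x,
    f.continuous.div (continuous_integral_comp_inv_smul μ f.continuous hfc) fun x ↦ (hF_pos x).ne',
    hfc.mono (by simp only [Function.support_div, inter_subset_left]),
    fun x ↦ div_nonneg (hf_nonneg x) (hF_pos x).le, fun x ↦ ?_⟩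
  simp only [hF_inv_smul]
  rw [integral_div, div_self (hF_pos x).ne']

/-- If `G` acts continuously and properly on a nonempty locally compact Hausdorff space `X`
with compact orbit space, then there exists a continuous compactly supported cutoff function
`c : X → [0, ∞)` with `∫_G c(g⁻¹ • x) dμ(g) = 1` for every `x ∈ X`. -/
theorem stmt_9 {G : Type*} [Group G] [TopologicalSpace G] [IsTopologicalGroup G]
    [LocallyCompactSpace G] [T2Space G] [MeasurableSpace G] [BorelSpace G]
    (μ : Measure G) [μ.IsHaarMeasure]
    (X : Type*) [Nonempty X] [TopologicalSpace X] [LocallyCompactSpace X] [T2Space X]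
    [MulAction G X] [ContinuousSMul G X] [ProperSMul G X]
    [CompactSpace (Quotient (MulAction.orbitRel G X))] :
    ∃ c : X → ℝ, Continuous c ∧ HasCompactSupport c ∧ (∀ x : X, 0 ≤ c x) ∧
      ∀ x : X, ∫ g : G, c (g⁻¹ • x) ∂μ = 1 :=
  stmt_9_general μ X
end

section
/- For all g ∈ G and x ∈ X, ∫_G p(g₁, x)·p(g₁⁻¹g, g₁⁻¹ · x) dμ(g₁) = p(g, x); that is, p is an idempotent for the convolution product of the algebra C_c(G, C₀(X)). -/
/-! The middle factor `√c(g₁⁻¹ • x)` occurs in both square roots of the integrand, so the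
integrand is `p(g, x) · c(g₁⁻¹ • x)`, and the normalisation of `c` integrates it to `p(g, x)`. -/

open MeasureTheory

theorem Real.sqrt_mul_mul_sqrt_mul {a b d : ℝ} (ha : 0 ≤ a) (hb : 0 ≤ b) :
    √(a * b) * √(b * d) = √(a * d) * b := by
  rw [Real.sqrt_mul ha, Real.sqrt_mul hb, Real.sqrt_mul ha]
  linear_combination √a * √d * Real.mul_self_sqrt hb

theorem inv_mul_smul_inv_smul {G X : Type*} [Group G] [MulAction G X] (g₁ g : G) (x : X) :
    (g₁⁻¹ * g)⁻¹ • g₁⁻¹ • x = g⁻¹ • x := by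
  rw [mul_inv_rev, inv_inv, mul_smul, smul_inv_smul]

theorem stmt_12_general {G : Type*} [Group G] [MeasurableSpace G]
    (μ : Measure G)
    (X : Type*)
    [MulAction G X]
    (c : X → ℝ) (hc0 : ∀ x : X, 0 ≤ c x)
    (hc1 : ∀ x : X, ∫ g : G, c (g⁻¹ • x) ∂μ = 1)
    (p : G → X → ℝ) (hp : ∀ (g : G) (x : X), p g x = Real.sqrt (c x * c (g⁻¹ • x)))
    (g : G) (x : X) :
    ∫ g₁ : G, p g₁ x * p (g₁⁻¹ * g) (g₁⁻¹ • x) ∂μ = p g x := by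
  have integrand_eq (g₁ : G) :
      p g₁ x * p (g₁⁻¹ * g) (g₁⁻¹ • x) = p g x * c (g₁⁻¹ • x) := by
    rw [hp, hp, hp, inv_mul_smul_inv_smul, Real.sqrt_mul_mul_sqrt_mul (hc0 _) (hc0 _)]
  simp_rw [integrand_eq]
  rw [integral_const_mul, hc1, mul_one]

/-- If `c : X → [0, ∞)` is a continuous compactly supported cutoff function with
`∫_G c(g⁻¹ • x) dμ(g) = 1` for all `x`, then `p(g, x) = √(c(x) c(g⁻¹ • x))` is an idempotent
for the convolution product of `C_c(G, C₀(X))`: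
`∫_G p(g₁, x) p(g₁⁻¹ g, g₁⁻¹ • x) dμ(g₁) = p(g, x)`. -/
theorem stmt_12 {G : Type*} [Group G] [TopologicalSpace G] [IsTopologicalGroup G]
    [LocallyCompactSpace G] [T2Space G] [MeasurableSpace G] [BorelSpace G]
    (μ : Measure G) [μ.IsHaarMeasure]
    (X : Type*) [TopologicalSpace X] [LocallyCompactSpace X] [T2Space X]
    [MulAction G X] [ContinuousSMul G X] [ProperSMul G X]
    (c : X → ℝ) (hc : Continuous c) (hcc : HasCompactSupport c) (hc0 : ∀ x : X, 0 ≤ c x)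
    (hc1 : ∀ x : X, ∫ g : G, c (g⁻¹ • x) ∂μ = 1)
    (p : G → X → ℝ) (hp : ∀ (g : G) (x : X), p g x = Real.sqrt (c x * c (g⁻¹ • x)))
    (g : G) (x : X) :
    ∫ g₁ : G, p g₁ x * p (g₁⁻¹ * g) (g₁⁻¹ • x) ∂μ = p g x :=
  stmt_12_general μ X c hc0 hc1 p hp g x
end
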